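/- arXiv:2208.08638 — 2 statements merged into one kernel-verified Lean document; each statement's English description precedes it below -/
import Mathlib

section
/- Let P and E be n×n real matrices and R a subset of {1,…,n} with |R| ≤ r. Assume |P_{ij}| ≤ ν for all i,j; E_{ij} = 0 whenever i ∉ R and j ∉ R; |E_{ij}| ≤ ε for all i,j; and σ is a permutation of {1,…,n} with |{i : σ(i) ≠ i}| ≤ ℓ. Then | ∑_{i,j} (P_{σ(i)σ(j)} − P_{ij}) · E_{ij} | ≤ 4 n ν ε · min(ℓ, r). -/
/-!
A pair `(i, j)` with neither endpoint in `R` contributes nothing because `E` vanishes there, and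
one with neither endpoint moved by `σ` contributes nothing because its shuffled entry is the
original one. Every term is at most `2νε`, and the pairs with an endpoint in a set `A` number at
most `2n|A|`; taking for `A` either `R` or the set of moved indices gives the two bounds.
-/

open Finset

lemma Finset.card_product_univ_union_univ_product_le {α : Type*} [Fintype α] [DecidableEq α]
    (A : Finset α) : #(A ×ˢ univ ∪ univ ×ˢ A) ≤ 2 * Fintype.card α * #A := by
  calc #(A ×ˢ univ ∪ univ ×ˢ A) ≤ #(A ×ˢ (univ : Finset α)) + #((univ : Finset α) ×ˢ A) :=
        card_union_le _ _
    _ = 2 * Fintype.card α * #A := by rw [card_product, card_product, card_univ]; ring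

section OrderedRing

variable {K : Type*} [Ring K] [LinearOrder K] [IsOrderedRing K]

lemma Finset.abs_sum_le_card_mul_of_eq_zero {ι : Type*} [Fintype ι] (S : Finset ι)
    {f : ι → K} {c : K} (hf : ∀ i ∉ S, f i = 0) (hc : ∀ i, |f i| ≤ c) :
    |∑ i, f i| ≤ #S * c := by
  rw [← sum_subset (subset_univ S) fun i _ hi => hf i hi]
  calc |∑ i ∈ S, f i| ≤ ∑ i ∈ S, |f i| := abs_sum_le_sum_abs _ _
    _ ≤ #S • c := sum_le_card_nsmul _ _ _ fun i _ => hc i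
    _ = #S * c := nsmul_eq_mul _ _

lemma Finset.abs_sum_prod_le_of_eq_zero_of_notMem {α : Type*} [Fintype α] [DecidableEq α]
    (A : Finset α) {m : ℕ} (hA : #A ≤ m) {f : α × α → K} {c : K} (hc₀ : 0 ≤ c)
    (hf : ∀ i j, i ∉ A → j ∉ A → f (i, j) = 0) (hc : ∀ p, |f p| ≤ c) :
    |∑ p, f p| ≤ 2 * Fintype.card α * m * c := by
  have hcross : ∀ p ∉ A ×ˢ univ ∪ univ ×ˢ A, f p = 0 := fun ⟨i, j⟩ hp => by
    simp only [mem_union, mem_product, mem_univ, and_true, true_and, not_or] at hp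
    exact hf i j hp.1 hp.2
  calc |∑ p, f p| ≤ #(A ×ˢ univ ∪ univ ×ˢ A) * c := abs_sum_le_card_mul_of_eq_zero _ hcross hc
    _ ≤ 2 * Fintype.card α * m * c := by
      have hcard : #(A ×ˢ univ ∪ univ ×ˢ A) ≤ 2 * Fintype.card α * m :=
        (card_product_univ_union_univ_product_le A).trans (by gcongr)
      gcongr
      exact_mod_cast Nat.mono_cast hcard

lemma abs_sub_mul_le {a b e ν ε : K} (ha : |a| ≤ ν) (hb : |b| ≤ ν) (he : |e| ≤ ε) :
    |(a - b) * e| ≤ 2 * ν * ε := by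
  have hab : |a - b| ≤ 2 * ν := (abs_sub _ _).trans ((add_le_add ha hb).trans_eq (two_mul ν).symm)
  rw [abs_mul]
  exact mul_le_mul hab he (abs_nonneg _) ((abs_nonneg _).trans hab)

end OrderedRing

/-- With `|P i j| ≤ ν`, `E` supported on rows/columns of a set `R` of at most
`r` indices, `|E i j| ≤ ε`, and `σ` a permutation moving at most `ℓ` indices,
`|∑ i j, (P (σ i) (σ j) − P i j)·E i j| ≤ 4 n ν ε · min(ℓ, r)`. -/
theorem shuffle_cross_term_bound
    {n : ℕ} (P E : Matrix (Fin n) (Fin n) ℝ) (R : Finset (Fin n)) (r ℓ : ℕ) (ν ε : ℝ)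
    (hR : R.card ≤ r)
    (hP : ∀ i j, |P i j| ≤ ν)
    (hE0 : ∀ i j, i ∉ R → j ∉ R → E i j = 0)
    (hEε : ∀ i j, |E i j| ≤ ε)
    (σ : Equiv.Perm (Fin n))
    (hσ : (Finset.univ.filter fun i => σ i ≠ i).card ≤ ℓ) :
    |∑ i, ∑ j, (P (σ i) (σ j) - P i j) * E i j| ≤
      4 * (n : ℝ) * ν * ε * ((min ℓ r : ℕ) : ℝ) := by
  rcases n.eq_zero_or_pos with rfl | hn
  · simp
  have hν : 0 ≤ ν := (abs_nonneg _).trans (hP ⟨0, hn⟩ ⟨0, hn⟩)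
  have hε : 0 ≤ ε := (abs_nonneg _).trans (hEε ⟨0, hn⟩ ⟨0, hn⟩)
  set f : Fin n × Fin n → ℝ := fun p => (P (σ p.1) (σ p.2) - P p.1 p.2) * E p.1 p.2
  have hf : ∀ p, |f p| ≤ 2 * ν * ε := fun p => abs_sub_mul_le (hP _ _) (hP _ _) (hEε _ _)
  have hfixed : ∀ i j, i ∉ univ.filter (fun i => σ i ≠ i) → j ∉ univ.filter (fun i => σ i ≠ i) →
      f (i, j) = 0 := fun i j hi hj => by
    simp only [mem_filter, mem_univ, true_and, not_not] at hi hj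
    simp [f, hi, hj]
  have houtside : ∀ i j, i ∉ R → j ∉ R → f (i, j) = 0 := fun i j hi hj => by
    simp [f, hE0 i j hi hj]
  rw [← Fintype.sum_prod_type', Nat.cast_min, mul_min_of_nonneg _ _ (by positivity)]
  refine le_min ?_ ?_
  · refine (abs_sum_prod_le_of_eq_zero_of_notMem _ hσ (by positivity) hfixed hf).trans_eq ?_
    simp only [Fintype.card_fin]; ring
  · refine (abs_sum_prod_le_of_eq_zero_of_notMem R hR (by positivity) houtside hf).trans_eq ?_
    simp only [Fintype.card_fin]; ring
end

section
/- Let K ≥ 2, let V be a finite set, b : V → {1,…,K} a block assignment with block sizes n_h = |b⁻¹(h)|, ν a real number, and Λ a symmetric K×K real matrix. Define the V×V matrix P by P_{vw} = ν·Λ_{b(v),b(w)}. Let S₁ ⊆ b⁻¹(1) and S₂ ⊆ b⁻¹(2) with |S₁| = |S₂| = m, and let σ be a permutation of V with σ(S₁) = S₂ and σ(v) = v for all v ∉ S₁ ∪ S₂. Then ∑_{v,w∈V} (P_{vw} − P_{σ(v)σ(w)})² = 2m²ν²(Λ₁₁−Λ₂₂)² + 4m(n₁−m)ν²(Λ₁₁−Λ₁₂)²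 + 4m(n₂−m)ν²(Λ₂₂−Λ₁₂)² + 4m·∑_{h=3}^{K} n_h ν² (Λ_{h1}−Λ_{h2})². -/
/-!
Write `f = b` and `g = b ∘ σ`, so the summand is `ν² (Λ (f v) (f w) - Λ (g v) (g w))²`, symmetric
in `(v, w)` because `Λ` is. Split `V` into the moved vertices `M = S₁ ∪ S₂` and the rest, on which
`g = f`. Pairs of unmoved vertices contribute nothing. On `M × M` the labels `(f, g)` are `(i, j)`
on `S₁` and `(j, i)` on `S₂`, giving `2m²(Λᵢᵢ - Λⱼⱼ)²`. A moved `v` against an unmoved `w`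
contributes `(Λ i (b w) - Λ j (b w))²` whichever of `S₁`, `S₂` it lies in, and the sum of this over
unmoved `w` is a fibre count of `b` minus the contribution of the `2m` moved vertices.
-/

open Finset

lemma Equiv.Perm.apply_mem_of_forall_notMem_eq {α : Type*} {σ : Equiv.Perm α} {s : Finset α}
    (hfix : ∀ x ∉ s, σ x = x) {x : α} (hx : x ∈ s) : σ x ∈ s := by
  by_contra hσx
  exact hσx (by rwa [σ.injective (hfix _ hσx)])

lemma Equiv.Perm.apply_mem_of_mem_of_image_eq {α : Type*} [DecidableEq α] {σ : Equiv.Perm α}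
    {S₁ S₂ : Finset α} (hdisj : _root_.Disjoint S₁ S₂) (hσ : S₁.image σ = S₂)
    (hfix : ∀ x ∉ S₁ ∪ S₂, σ x = x) {x : α} (hx : x ∈ S₂) : σ x ∈ S₁ := by
  have hmem := σ.apply_mem_of_forall_notMem_eq hfix (mem_union_right S₁ hx)
  refine (mem_union.mp hmem).resolve_right fun hσx => ?_
  rw [← hσ, mem_image] at hσx
  obtain ⟨y, hy, hyx⟩ := hσx
  exact disjoint_left.mp hdisj (σ.injective hyx ▸ hy) hx

lemma Finset.sum_sum_eq_blocks_of_symm {α β : Type*} [Fintype α] [DecidableEq α]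
    [AddCommMonoid β] (s : Finset α) {F : α → α → β} (hF : ∀ a b, F a b = F b a) :
    ∑ a, ∑ b, F a b = ∑ a ∈ s, ∑ b ∈ s, F a b + 2 • ∑ a ∈ s, ∑ b ∈ sᶜ, F a b
      + ∑ a ∈ sᶜ, ∑ b ∈ sᶜ, F a b := by
  have hcross : ∑ a ∈ sᶜ, ∑ b ∈ s, F a b = ∑ a ∈ s, ∑ b ∈ sᶜ, F a b := by
    rw [sum_comm]; simp_rw [hF]
  simp_rw [← sum_add_sum_compl s, sum_add_distrib, hcross, two_nsmul]
  abel

section Relabel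

variable {K : ℕ} {V : Type*} {Λ : Matrix (Fin K) (Fin K) ℝ} {f g : V → Fin K}

lemma sum_sum_sq_sub_of_labels_eq {A B : Finset V} {a a' c c' : Fin K}
    (hA : ∀ v ∈ A, f v = a ∧ g v = a') (hB : ∀ w ∈ B, f w = c ∧ g w = c') :
    ∑ v ∈ A, ∑ w ∈ B, (Λ (f v) (f w) - Λ (g v) (g w)) ^ 2
      = #A * #B * (Λ a c - Λ a' c') ^ 2 := by
  rw [sum_congr rfl fun v hv => sum_congr rfl fun w hw => by
    rw [(hA v hv).1, (hA v hv).2, (hB w hw).1, (hB w hw).2]]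
  simp only [sum_const, nsmul_eq_mul]
  ring

variable [DecidableEq V] {S₁ S₂ : Finset V} {m : ℕ} {i j : Fin K}

lemma sum_sum_sq_sub_swapped_block (hΛ : Λ.IsSymm) (hdisj : Disjoint S₁ S₂)
    (h₁ : ∀ v ∈ S₁, f v = i ∧ g v = j) (h₂ : ∀ v ∈ S₂, f v = j ∧ g v = i)
    (hcard₁ : #S₁ = m) (hcard₂ : #S₂ = m) :
    ∑ v ∈ S₁ ∪ S₂, ∑ w ∈ S₁ ∪ S₂, (Λ (f v) (f w) - Λ (g v) (g w)) ^ 2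
      = 2 * m ^ 2 * (Λ i i - Λ j j) ^ 2 := by
  simp_rw [sum_union hdisj, sum_add_distrib, sum_sum_sq_sub_of_labels_eq h₁ h₁,
    sum_sum_sq_sub_of_labels_eq h₁ h₂, sum_sum_sq_sub_of_labels_eq h₂ h₁,
    sum_sum_sq_sub_of_labels_eq h₂ h₂, hcard₁, hcard₂, hΛ.apply i j]
  ring

lemma sum_sum_sq_sub_cross_block [Fintype V] (hdisj : Disjoint S₁ S₂)
    (h₁ : ∀ v ∈ S₁, f v = i ∧ g v = j) (h₂ : ∀ v ∈ S₂, f v = j ∧ g v = i)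
    (hfix : ∀ w ∉ S₁ ∪ S₂, g w = f w) (hcard₁ : #S₁ = m) (hcard₂ : #S₂ = m) :
    ∑ v ∈ S₁ ∪ S₂, ∑ w ∈ (S₁ ∪ S₂)ᶜ, (Λ (f v) (f w) - Λ (g v) (g w)) ^ 2
      = 2 * m * ∑ w ∈ (S₁ ∪ S₂)ᶜ, (Λ i (f w) - Λ j (f w)) ^ 2 := by
  have hrow : ∀ v ∈ S₁ ∪ S₂, ∑ w ∈ (S₁ ∪ S₂)ᶜ, (Λ (f v) (f w) - Λ (g v) (g w)) ^ 2
      = ∑ w ∈ (S₁ ∪ S₂)ᶜ, (Λ i (f w) - Λ j (f w)) ^ 2 := by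
    intro v hv
    refine sum_congr rfl fun w hw => ?_
    rw [hfix w (mem_compl.mp hw)]
    rcases mem_union.mp hv with hv | hv
    · rw [(h₁ v hv).1, (h₁ v hv).2]
    · rw [(h₂ v hv).1, (h₂ v hv).2, sub_sq_comm]
  rw [sum_congr rfl hrow, sum_const, card_union_of_disjoint hdisj, hcard₁, hcard₂, nsmul_eq_mul]
  push_cast
  ring

end Relabel

lemma Finset.sum_comp_eq_sum_card_fiber_mul {α κ R : Type*} [Fintype α] [Fintype κ]
    [DecidableEq κ] [Semiring R] (b : α → κ) (φ : κ → R) :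
    ∑ a, φ (b a) = ∑ k, #{a | b a = k} * φ k := by
  rw [← sum_fiberwise' univ b φ]
  simp only [sum_const, nsmul_eq_mul]

section BlockSwap

variable {K : ℕ} {V : Type*} [Fintype V] [DecidableEq V] {b : V → Fin K}
  {S₁ S₂ : Finset V} {m : ℕ} {i j : Fin K}

lemma sum_compl_union_comp (hdisj : Disjoint S₁ S₂) (hS₁ : ∀ v ∈ S₁, b v = i)
    (hS₂ : ∀ v ∈ S₂, b v = j) (hcard₁ : #S₁ = m) (hcard₂ : #S₂ = m) (φ : Fin K → ℝ) :
    ∑ w ∈ (S₁ ∪ S₂)ᶜ, φ (b w) = ∑ h, #{w | b w = h} * φ h - m * φ i - m * φ j := by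
  have hmoved : ∑ w ∈ S₁ ∪ S₂, φ (b w) = m * φ i + m * φ j := by
    rw [sum_union hdisj, sum_congr (rfl : S₁ = S₁) fun v hv => congrArg φ (hS₁ v hv),
      sum_congr (rfl : S₂ = S₂) fun v hv => congrArg φ (hS₂ v hv)]
    simp only [sum_const, hcard₁, hcard₂, nsmul_eq_mul]
  rw [← sum_comp_eq_sum_card_fiber_mul, ← sum_compl_add_sum (S₁ ∪ S₂), hmoved]
  ring

theorem sum_sum_sq_sub_block_swap {Λ : Matrix (Fin K) (Fin K) ℝ} (hΛ : Λ.IsSymm) (hij : i ≠ j)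
    {σ : Equiv.Perm V} (hS₁ : ∀ v ∈ S₁, b v = i) (hS₂ : ∀ v ∈ S₂, b v = j)
    (hcard₁ : #S₁ = m) (hcard₂ : #S₂ = m) (hσ : S₁.image σ = S₂)
    (hfix : ∀ v ∉ S₁ ∪ S₂, σ v = v) :
    ∑ v, ∑ w, (Λ (b v) (b w) - Λ (b (σ v)) (b (σ w))) ^ 2
      = 2 * m ^ 2 * (Λ i i - Λ j j) ^ 2
        + 4 * m * (#{v | b v = i} - m) * (Λ i i - Λ i j) ^ 2
        + 4 * m * (#{v | b v = j} - m) * (Λ j j - Λ i j) ^ 2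
        + 4 * m * ∑ h ∈ univ \ {i, j}, #{v | b v = h} * (Λ h i - Λ h j) ^ 2 := by
  have hdisj : Disjoint S₁ S₂ :=
    disjoint_left.mpr fun v h₁ h₂ => hij ((hS₁ v h₁).symm.trans (hS₂ v h₂))
  have h₁ : ∀ v ∈ S₁, b v = i ∧ b (σ v) = j :=
    fun v hv => ⟨hS₁ v hv, hS₂ _ (hσ ▸ mem_image_of_mem σ hv)⟩
  have h₂ : ∀ v ∈ S₂, b v = j ∧ b (σ v) = i :=
    fun v hv => ⟨hS₂ v hv, hS₁ _ (σ.apply_mem_of_mem_of_image_eq hdisj hσ hfix hv)⟩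
  have hrest : ∀ v ∉ S₁ ∪ S₂, b (σ v) = b v := fun v hv => by rw [hfix v hv]
  have hfixed : ∑ v ∈ (S₁ ∪ S₂)ᶜ, ∑ w ∈ (S₁ ∪ S₂)ᶜ,
      (Λ (b v) (b w) - Λ (b (σ v)) (b (σ w))) ^ 2 = 0 :=
    sum_eq_zero fun v hv => sum_eq_zero fun w hw => by
      rw [hrest v (mem_compl.mp hv), hrest w (mem_compl.mp hw), sub_self, sq, mul_zero]
  have hsplit : ∀ c : Fin K → ℝ, ∑ h, c h = c i + c j + ∑ h ∈ univ \ {i, j}, c h := fun c => by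
    rw [← sum_sdiff (subset_univ {i, j}), sum_pair hij, add_comm]
  rw [sum_sum_eq_blocks_of_symm (S₁ ∪ S₂) fun v w => by
      rw [hΛ.apply (b v) (b w), hΛ.apply (b (σ v)) (b (σ w))],
    sum_sum_sq_sub_swapped_block hΛ hdisj h₁ h₂ hcard₁ hcard₂,
    sum_sum_sq_sub_cross_block hdisj h₁ h₂ hrest hcard₁ hcard₂, hfixed,
    sum_compl_union_comp hdisj hS₁ hS₂ hcard₁ hcard₂ fun h => (Λ i h - Λ j h) ^ 2, hsplit,
    sum_congr rfl fun h _ => by rw [hΛ.apply h i, hΛ.apply h j], hΛ.apply j i]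
  ring

end BlockSwap

/-- In a stochastic block model with `K ≥ 2` blocks, symmetric block matrix `Λ`,
sparsity `ν`, and edge-probability matrix `P v w = ν Λ_{b(v) b(w)}`, if `σ` interchanges a set
`S₁` of `m` vertices of block 1 with a set `S₂` of `m` vertices of block 2 and fixes all other
vertices, then
`∑ v w, (P v w − P (σ v) (σ w))² = 2m²ν²(Λ₁₁−Λ₂₂)² + 4m(n₁−m)ν²(Λ₁₁−Λ₁₂)²
  + 4m(n₂−m)ν²(Λ₂₂−Λ₁₂)² + 4m ∑_{h=3}^{K} n_h ν² (Λ_{h1}−Λ_{h2})²`.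
(Blocks `1, 2` are indexed here by `⟨0,_⟩, ⟨1,_⟩ : Fin K`.) -/
theorem sbm_block_shuffle_frobenius_sq
    {K : ℕ} (hK : 2 ≤ K) {V : Type*} [Fintype V] [DecidableEq V]
    (b : V → Fin K) (ν : ℝ) (Λ : Matrix (Fin K) (Fin K) ℝ) (hΛ : Λ.IsSymm)
    (nb : Fin K → ℕ) (hnb : ∀ h, nb h = (Finset.univ.filter fun v => b v = h).card)
    (P : V → V → ℝ) (hP : ∀ v w, P v w = ν * Λ (b v) (b w))
    (m : ℕ) (S₁ S₂ : Finset V)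
    (hS₁ : ∀ v ∈ S₁, b v = ⟨0, by omega⟩) (hS₂ : ∀ v ∈ S₂, b v = ⟨1, by omega⟩)
    (hcard₁ : S₁.card = m) (hcard₂ : S₂.card = m)
    (σ : Equiv.Perm V) (hσ : S₁.image σ = S₂)
    (hfix : ∀ v, v ∉ S₁ ∪ S₂ → σ v = v) :
    ∑ v, ∑ w, (P v w - P (σ v) (σ w)) ^ 2 =
      2 * (m : ℝ) ^ 2 * ν ^ 2 * (Λ ⟨0, by omega⟩ ⟨0, by omega⟩ - Λ ⟨1, by omega⟩ ⟨1, by omega⟩) ^ 2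
      + 4 * (m : ℝ) * ((nb ⟨0, by omega⟩ : ℝ) - (m : ℝ)) * ν ^ 2 *
          (Λ ⟨0, by omega⟩ ⟨0, by omega⟩ - Λ ⟨0, by omega⟩ ⟨1, by omega⟩) ^ 2
      + 4 * (m : ℝ) * ((nb ⟨1, by omega⟩ : ℝ) - (m : ℝ)) * ν ^ 2 *
          (Λ ⟨1, by omega⟩ ⟨1, by omega⟩ - Λ ⟨0, by omega⟩ ⟨1, by omega⟩) ^ 2
      + 4 * (m : ℝ) * ∑ h ∈ (Finset.univ \ {⟨0, by omega⟩, ⟨1, by omega⟩} : Finset (Fin K)),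
          (nb h : ℝ) * ν ^ 2 * (Λ h ⟨0, by omega⟩ - Λ h ⟨1, by omega⟩) ^ 2 := by
  set i : Fin K := ⟨0, by omega⟩
  set j : Fin K := ⟨1, by omega⟩
  have hij : i ≠ j := by simp [i, j, Fin.ext_iff]
  have hsq : ∀ v w, (P v w - P (σ v) (σ w)) ^ 2
      = ν ^ 2 * (Λ (b v) (b w) - Λ (b (σ v)) (b (σ w))) ^ 2 := fun v w => by
    rw [hP, hP]; ring
  have hfactor : ∑ h ∈ univ \ {i, j}, nb h * ν ^ 2 * (Λ h i - Λ h j) ^ 2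
      = ν ^ 2 * ∑ h ∈ univ \ {i, j}, nb h * (Λ h i - Λ h j) ^ 2 := by
    rw [mul_sum]; exact sum_congr rfl fun _ _ => by ring
  rw [hfactor]
  simp only [hsq, ← mul_sum, hnb, sum_sum_sq_sub_block_swap hΛ hij hS₁ hS₂ hcard₁ hcard₂ hσ hfix]
  ring
end
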